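/- Under g-bit rounding towards zero of a unit ℓ2-norm nonnegative vector α, the trace distance between the normalized states satisfies √(1 - |⟨α|A⟩/‖A‖₂|²) ≤ 2^{(1-g)/2} √(‖α‖₁). -/

import Mathlib

open Finset Real

/-! Rounding towards zero gives `0 ≤ A i ≤ α i ≤ A i + 2⁻ᵍ`. Hence `⟨α, A⟩ ≥ ‖A‖²`, so the squared
overlap `⟨α, A⟩² / ‖A‖²` is at least `‖A‖²`, while
`1 - ‖A‖² = ∑ (α i - A i) (α i + A i) ≤ 2 · 2⁻ᵍ · ‖α‖₁`. -/

section FloorRounding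

variable {s x : ℝ}

lemma floor_mul_div_nonneg (hs : 0 < s) (hx : 0 ≤ x) : 0 ≤ (⌊s * x⌋ : ℝ) / s :=
  div_nonneg (mod_cast Int.floor_nonneg.mpr (mul_nonneg hs.le hx)) hs.le

lemma floor_mul_div_le (hs : 0 < s) : (⌊s * x⌋ : ℝ) / s ≤ x := by
  rw [div_le_iff₀ hs, mul_comm x]
  exact Int.floor_le _

lemma sub_floor_mul_div_le_inv (hs : 0 < s) : x - (⌊s * x⌋ : ℝ) / s ≤ s⁻¹ := by
  have h := Int.lt_floor_add_one (s * x)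
  rw [sub_le_iff_le_add, inv_eq_one_div, ← add_div, le_div_iff₀ hs, mul_comm]
  linarith

end FloorRounding

section RoundedVector

variable {ι : Type*} [Fintype ι] {a b : ι → ℝ} {ε : ℝ}

lemma sum_sq_le_sum_mul_of_le (hb : ∀ i, 0 ≤ b i) (hba : ∀ i, b i ≤ a i) :
    ∑ i, b i ^ 2 ≤ ∑ i, a i * b i :=
  sum_le_sum fun i _ => by nlinarith [hb i, hba i]

lemma sum_sq_sub_sum_sq_le (hb : ∀ i, 0 ≤ b i) (hba : ∀ i, b i ≤ a i)
    (hab : ∀ i, a i - b i ≤ ε) :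
    ∑ i, a i ^ 2 - ∑ i, b i ^ 2 ≤ 2 * ε * ∑ i, a i := by
  rw [← sum_sub_distrib, mul_sum]
  refine sum_le_sum fun i _ => ?_
  have hsum : 0 ≤ a i + b i := by linarith [hb i, hba i]
  have hε : 0 ≤ ε := (sub_nonneg.mpr (hba i)).trans (hab i)
  calc a i ^ 2 - b i ^ 2 = (a i - b i) * (a i + b i) := by ring
    _ ≤ ε * (a i + b i) := mul_le_mul_of_nonneg_right (hab i) hsum
    _ ≤ ε * (2 * a i) := mul_le_mul_of_nonneg_left (by linarith [hba i]) hε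
    _ = 2 * ε * a i := by ring

end RoundedVector

-- For `T = 0` both sides vanish, because `S / √0 = 0`.
lemma le_div_sqrt_sq {S T : ℝ} (hT : 0 ≤ T) (hTS : T ≤ S) : T ≤ (S / √T) ^ 2 := by
  rw [div_pow, sq_sqrt hT]
  rcases hT.eq_or_lt with rfl | hT
  · simp
  · rw [le_div_iff₀ hT]
    nlinarith

lemma sqrt_two_mul_inv_two_pow (g : ℕ) :
    √(2 * ((2 : ℝ) ^ g)⁻¹) = (2 : ℝ) ^ (((1 : ℝ) - g) / 2) := by
  have h : 2 * ((2 : ℝ) ^ g)⁻¹ = (2 : ℝ) ^ ((1 : ℝ) - g) := by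
    rw [rpow_sub two_pos, rpow_one, rpow_natCast, div_eq_mul_inv]
  rw [h, sqrt_eq_rpow, ← rpow_mul zero_le_two]
  ring_nf

theorem stmt_1_general (N g : ℕ)
    (α A : Fin N → ℝ)
    (hα_nonneg : ∀ i, 0 ≤ α i)
    (hα_norm : ∑ i, (α i) ^ 2 = 1)
    (hA : ∀ i, A i = ⌊(2 : ℝ) ^ g * α i⌋ / 2 ^ g) :
    Real.sqrt (1 - ((∑ i, α i * A i) / Real.sqrt (∑ i, (A i) ^ 2)) ^ 2) ≤
      (2 : ℝ) ^ (((1 : ℝ) - g) / 2) * Real.sqrt (∑ i, α i) := by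
  have h2g : (0 : ℝ) < 2 ^ g := by positivity
  have hA_nonneg i : 0 ≤ A i := hA i ▸ floor_mul_div_nonneg h2g (hα_nonneg i)
  have hA_le i : A i ≤ α i := hA i ▸ floor_mul_div_le h2g
  have hA_err i : α i - A i ≤ ((2 : ℝ) ^ g)⁻¹ := hA i ▸ sub_floor_mul_div_le_inv h2g
  have hoverlap := le_div_sqrt_sq (sum_nonneg fun i _ => sq_nonneg (A i))
    (sum_sq_le_sum_mul_of_le hA_nonneg hA_le)
  have hnorm_defect := sum_sq_sub_sum_sq_le hA_nonneg hA_le hA_err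
  rw [hα_norm] at hnorm_defect
  calc √(1 - ((∑ i, α i * A i) / √(∑ i, A i ^ 2)) ^ 2)
      ≤ √(2 * ((2 : ℝ) ^ g)⁻¹ * ∑ i, α i) := sqrt_le_sqrt (by linarith)
    _ = (2 : ℝ) ^ (((1 : ℝ) - g) / 2) * √(∑ i, α i) := by
      rw [sqrt_mul (by positivity), sqrt_two_mul_inv_two_pow]

/-- trace distance between |α⟩ and the g-bit rounded state |A⟩ is at most
    2^{(1-g)/2} √(‖α‖₁). -/
theorem stmt_1 (N g : ℕ) (hN : 0 < N) (hg : 0 < g)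
    (α A : Fin N → ℝ)
    (hα_nonneg : ∀ i, 0 ≤ α i)
    (hα_norm : ∑ i, (α i) ^ 2 = 1)
    (hA : ∀ i, A i = ⌊(2 : ℝ) ^ g * α i⌋ / 2 ^ g)
    (hA_pos : 0 < Real.sqrt (∑ i, (A i) ^ 2))
    (hsmall : 2 * ((2 : ℝ) ^ g)⁻¹ * ∑ i, α i ≤ 1) :
    Real.sqrt (1 - ((∑ i, α i * A i) / Real.sqrt (∑ i, (A i) ^ 2)) ^ 2) ≤
      (2 : ℝ) ^ (((1 : ℝ) - g) / 2) * Real.sqrt (∑ i, α i) :=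
  stmt_1_general N g α A hα_nonneg hα_norm hA
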